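/- Let w be a graphon with out-degree function d(x) = ∫₀¹ w(x,y) dy satisfying d(x) ≥ d₀ > 0 for all x ∈ [0,1], and suppose that for every a ∈ [0,1], lim_{x → a} ∫₀¹ |w(x,y) − w(a,y)| dy = 0. If φ ∈ L²([0,1]) satisfies (1/d(x)) ∫₀¹ w(x,y) φ(y) dy = λ φ(x) for all x ∈ [0,1] with λ ≠ 0, then φ is continuous on [0,1]. -/

import Mathlib

/-!
Since `λ ≠ 0` and `d ≥ d₀ > 0`, the eigenvalue equation gives `φ = F / (λ d)` on `[0,1]` with
`F x = ∫ w(x,y) φ(y) dy`, and `d x = ∫ w(x,y) · 1 dy` is of the same form. Such integrals are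
continuous in `x`: because `|w(x,·) - w(a,·)| ≤ 1`, Cauchy–Schwarz gives
`|F x - F a| ≤ ‖w(x,·) - w(a,·)‖₁ ^ (1/2) ‖φ‖₂`, which tends to `0` by the `L¹`-continuity of `w`.
-/

open MeasureTheory Filter Topology

namespace MeasureTheory

variable {α : Type*} [MeasurableSpace α] {μ : Measure α} [IsFiniteMeasure μ]

lemma abs_integral_mul_le_sqrt_integral_abs_mul {g φ : α → ℝ} (hg_meas : AEStronglyMeasurable g μ)
    (hg : ∀ᵐ y ∂μ, |g y| ≤ 1) (hφ : MemLp φ 2 μ) :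
    |∫ y, g y * φ y ∂μ| ≤ √(∫ y, |g y| ∂μ) * (∫ y, ‖φ y‖ ^ (2 : ℝ) ∂μ) ^ (1 / 2 : ℝ) := by
  have hg_norm : ∀ᵐ y ∂μ, ‖g y‖ ≤ 1 := by simpa only [Real.norm_eq_abs] using hg
  have hg_sq_le : ∫ y, ‖g y‖ ^ (2 : ℝ) ∂μ ≤ ∫ y, |g y| ∂μ := by
    refine integral_mono_of_nonneg (.of_forall fun y => by positivity)
      (Integrable.of_bound hg_meas 1 hg_norm).abs ?_
    filter_upwards [hg] with y hy
    rw [Real.rpow_two, Real.norm_eq_abs]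
    exact pow_le_of_le_one (abs_nonneg _) hy two_ne_zero
  calc |∫ y, g y * φ y ∂μ| ≤ ∫ y, ‖g y‖ * ‖φ y‖ ∂μ := by
        simpa only [Real.norm_eq_abs, abs_mul] using
          norm_integral_le_integral_norm (μ := μ) fun y => g y * φ y
    _ ≤ (∫ y, ‖g y‖ ^ (2 : ℝ) ∂μ) ^ (1 / 2 : ℝ) * (∫ y, ‖φ y‖ ^ (2 : ℝ) ∂μ) ^ (1 / 2 : ℝ) :=
        integral_mul_norm_le_Lp_mul_Lq .two_two (.of_bound hg_meas 1 hg_norm) (by simpa using hφ)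
    _ ≤ √(∫ y, |g y| ∂μ) * (∫ y, ‖φ y‖ ^ (2 : ℝ) ∂μ) ^ (1 / 2 : ℝ) := by
        rw [Real.sqrt_eq_rpow]
        gcongr

variable {X : Type*} [TopologicalSpace X] {s : Set X} {w : X → α → ℝ}

lemma continuousWithinAt_integral_mul_of_tendsto_integral_abs_sub
    (hw_meas : ∀ x ∈ s, AEStronglyMeasurable (w x) μ)
    (hw_range : ∀ x ∈ s, ∀ᵐ y ∂μ, w x y ∈ Set.Icc (0 : ℝ) 1) {a : X} (ha : a ∈ s)
    (hw_cont : Tendsto (fun x => ∫ y, |w x y - w a y| ∂μ) (𝓝[s] a) (𝓝 0))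
    {φ : α → ℝ} (hφ : MemLp φ 2 μ) :
    ContinuousWithinAt (fun x => ∫ y, w x y * φ y ∂μ) s a := by
  set C := (∫ y, ‖φ y‖ ^ (2 : ℝ) ∂μ) ^ (1 / 2 : ℝ)
  have hint : ∀ x ∈ s, Integrable (fun y => w x y * φ y) μ := fun x hx =>
    (hφ.integrable one_le_two).bdd_mul (c := 1) (hw_meas x hx) <| (hw_range x hx).mono
      fun y hy => by rw [Real.norm_eq_abs, abs_le]; constructor <;> linarith [hy.1, hy.2]
  have hbound : ∀ᶠ x in 𝓝[s] a,
      ‖(∫ y, w x y * φ y ∂μ) - ∫ y, w a y * φ y ∂μ‖ ≤ √(∫ y, |w x y - w a y| ∂μ) * C := by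
    filter_upwards [self_mem_nhdsWithin] with x hx
    rw [← integral_sub (hint x hx) (hint a ha)]
    simp only [← sub_mul, Real.norm_eq_abs]
    refine abs_integral_mul_le_sqrt_integral_abs_mul ((hw_meas x hx).sub (hw_meas a ha)) ?_ hφ
    filter_upwards [hw_range x hx, hw_range a ha] with y hx hy
    rw [abs_le]; constructor <;> linarith [hx.1, hx.2, hy.1, hy.2]
  have hlim : Tendsto (fun x => √(∫ y, |w x y - w a y| ∂μ) * C) (𝓝[s] a) (𝓝 0) := by
    simpa using ((Real.continuous_sqrt.tendsto 0).comp hw_cont).mul_const C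
  rw [ContinuousWithinAt, ← tendsto_sub_nhds_zero_iff]
  exact squeeze_zero_norm' hbound hlim

lemma continuousOn_integral_mul_of_tendsto_integral_abs_sub
    (hw_meas : ∀ x ∈ s, AEStronglyMeasurable (w x) μ)
    (hw_range : ∀ x ∈ s, ∀ᵐ y ∂μ, w x y ∈ Set.Icc (0 : ℝ) 1)
    (hw_cont : ∀ a ∈ s, Tendsto (fun x => ∫ y, |w x y - w a y| ∂μ) (𝓝[s] a) (𝓝 0))
    {φ : α → ℝ} (hφ : MemLp φ 2 μ) :
    ContinuousOn (fun x => ∫ y, w x y * φ y ∂μ) s := fun a ha =>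
  continuousWithinAt_integral_mul_of_tendsto_integral_abs_sub hw_meas hw_range ha (hw_cont a ha) hφ

end MeasureTheory

/-- If the graphon is L¹-continuous in its first argument, then
Koopman eigenfunctions with nonzero eigenvalue are continuous on [0,1]. -/
theorem koopman_eigenfunction_continuous
    (w : ℝ → ℝ → ℝ)
    (hw_meas : Measurable (Function.uncurry w))
    (hw_range : ∀ x ∈ Set.Icc (0:ℝ) 1, ∀ y ∈ Set.Icc (0:ℝ) 1, w x y ∈ Set.Icc (0:ℝ) 1)
    (d : ℝ → ℝ) (hd : ∀ x, d x = ∫ y in (0:ℝ)..1, w x y)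
    (d₀ : ℝ) (hd₀ : 0 < d₀) (hd_lb : ∀ x ∈ Set.Icc (0:ℝ) 1, d₀ ≤ d x)
    (hw_cont : ∀ a ∈ Set.Icc (0:ℝ) 1,
      Filter.Tendsto (fun x => ∫ y in (0:ℝ)..1, |w x y - w a y|)
        (nhdsWithin a (Set.Icc (0:ℝ) 1)) (nhds 0))
    (φ : ℝ → ℝ) (hφ_L2 : MemLp φ 2 (volume.restrict (Set.Icc (0:ℝ) 1)))
    (l : ℝ) (hl : l ≠ 0)
    (heig : ∀ x ∈ Set.Icc (0:ℝ) 1,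
      (1 / d x) * (∫ y in (0:ℝ)..1, w x y * φ y) = l * φ x) :
    ContinuousOn φ (Set.Icc (0:ℝ) 1) := by
  simp only [intervalIntegral.integral_of_le zero_le_one] at hd hw_cont heig
  set μ := volume.restrict (Set.Ioc (0:ℝ) 1)
  have hφ : MemLp φ 2 μ := by rwa [← Measure.restrict_congr_set Ioc_ae_eq_Icc] at hφ_L2
  have hw_meas_μ : ∀ x ∈ Set.Icc (0:ℝ) 1, AEStronglyMeasurable (w x) μ :=
    fun x _ => hw_meas.of_uncurry_left.aestronglyMeasurable
  have hw_range_μ : ∀ x ∈ Set.Icc (0:ℝ) 1, ∀ᵐ y ∂μ, w x y ∈ Set.Icc (0:ℝ) 1 :=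
    fun x hx => ae_restrict_of_forall_mem measurableSet_Ioc fun y hy =>
      hw_range x hx y (Set.Ioc_subset_Icc_self hy)
  have hF_cont := continuousOn_integral_mul_of_tendsto_integral_abs_sub
    hw_meas_μ hw_range_μ hw_cont hφ
  have hd_cont : ContinuousOn d (Set.Icc 0 1) := by
    simpa only [mul_one, ← hd] using continuousOn_integral_mul_of_tendsto_integral_abs_sub
      hw_meas_μ hw_range_μ hw_cont (memLp_const (1 : ℝ))
  have hld_ne : ∀ x ∈ Set.Icc (0:ℝ) 1, l * d x ≠ 0 := fun x hx =>
    mul_ne_zero hl (hd₀.trans_le (hd_lb x hx)).ne'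
  have hφ_eq : Set.EqOn φ (fun x => (∫ y, w x y * φ y ∂μ) / (l * d x)) (Set.Icc 0 1) := by
    intro x hx
    rw [eq_div_iff (hld_ne x hx), ← mul_assoc, mul_comm (φ x), ← heig x hx]
    field_simp [right_ne_zero_of_mul (hld_ne x hx)]
  exact (hF_cont.div (continuousOn_const.mul hd_cont) hld_ne).congr hφ_eq
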